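/- arXiv:1002.0020 — 4 statements merged into one kernel-verified Lean document; each statement's English description precedes it below -/
import Mathlib

section
/- If x, y, z are nonzero integers with gcd(x,y,z) = 1 and x² + y² = z³, then there exist integers u, v with gcd(u,v) = 1 and uv ≠ 0 such that x = u(u² − 3v²), y = v(3u² − v²) and z = u² + v². -/
/-!
Coprimality of `x` and `y` forces `z` to be odd (otherwise `4 ∣ x² + y²`), and then `α = x + yi`
and its conjugate are coprime in the PID `ℤ[i]`: their ideal contains `2` and the odd norm `z³`.
Since `α ᾱ = z³`, `α` is a unit times a cube, and every unit of `ℤ[i]` is a cube because it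
satisfies `ζ⁴ = 1`. Writing `α = (u + vi)³` and expanding gives `x` and `y`; comparing norms gives
`z³ = (u² + v²)³`.
-/

namespace Int

theorem gcd_eq_one_of_sq_add_sq_eq_pow {x y z : ℤ} {n : ℕ}
    (hgcd : Int.gcd (Int.gcd x y) z = 1) (h : x ^ 2 + y ^ 2 = z ^ n) : Int.gcd x y = 1 := by
  have hdvd : (Int.gcd x y : ℤ) ∣ z ^ n :=
    h ▸ dvd_add ((Int.gcd_dvd_left x y).pow two_ne_zero) ((Int.gcd_dvd_right x y).pow two_ne_zero)
  have hunit :=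
    ((Int.isCoprime_iff_gcd_eq_one.mpr hgcd).pow_right (n := n)).isUnit_of_dvd' dvd_rfl hdvd
  exact_mod_cast Int.isUnit_iff_natAbs_eq.mp hunit

theorem not_four_dvd_sq_add_sq_of_isCoprime {x y : ℤ} (hxy : IsCoprime x y) :
    ¬ 4 ∣ x ^ 2 + y ^ 2 := by
  have hsq : ∀ t : ℤ, 2 ∣ t ∧ t ^ 2 % 4 = 0 ∨ t ^ 2 % 4 = 1 := fun t ↦ by
    rcases Int.even_or_odd t with ⟨k, rfl⟩ | ht
    · exact .inl ⟨⟨k, by ring⟩, by ring_nf; omega⟩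
    · exact .inr (Int.sq_mod_four_eq_one_of_odd ht)
  have h2 : ¬ (2 ∣ x ∧ 2 ∣ y) := fun ⟨hx, hy⟩ ↦ by
    have := Int.isUnit_iff.mp (hxy.isUnit_of_dvd' hx hy); omega
  rcases hsq x with ⟨hx, hx4⟩ | hx4 <;> rcases hsq y with ⟨hy, hy4⟩ | hy4 <;> omega

theorem odd_of_sq_add_sq_eq_cube {x y z : ℤ} (hxy : IsCoprime x y)
    (h : x ^ 2 + y ^ 2 = z ^ 3) : Odd z := by
  refine Int.not_even_iff_odd.mp fun ⟨k, hk⟩ ↦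
    not_four_dvd_sq_add_sq_of_isCoprime hxy ⟨2 * k ^ 3, ?_⟩
  rw [h, hk]; ring

end Int

open Zsqrtd

namespace GaussianInt

theorem norm_eq_sq_add_sq (α : GaussianInt) : α.norm = α.re ^ 2 + α.im ^ 2 := by
  rw [Zsqrtd.norm_def]; ring

theorem pow_four_eq_one_of_isUnit {ζ : GaussianInt} (hζ : IsUnit ζ) : ζ ^ 4 = 1 := by
  have hn : ζ.re ^ 2 + ζ.im ^ 2 = 1 := by
    rw [← norm_eq_sq_add_sq, Zsqrtd.norm_eq_one_iff' (by norm_num)]; exact hζ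
  have hre_im : ζ.re * ζ.im = 0 := by nlinarith [sq_nonneg ζ.re, sq_nonneg ζ.im]
  apply Zsqrtd.ext <;> simp only [pow_succ, pow_zero, one_mul, re_mul, im_mul, re_one, im_one]
  · linear_combination (ζ.re ^ 2 + ζ.im ^ 2 + 1) * hn - 8 * ζ.re * ζ.im * hre_im
  · linear_combination 4 * (ζ.re ^ 2 - ζ.im ^ 2) * hre_im

theorem re_pow_three (γ : GaussianInt) : (γ ^ 3).re = γ.re * (γ.re ^ 2 - 3 * γ.im ^ 2) := by
  simp only [pow_succ, pow_zero, one_mul, re_mul, im_mul]; ring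

theorem im_pow_three (γ : GaussianInt) : (γ ^ 3).im = γ.im * (3 * γ.re ^ 2 - γ.im ^ 2) := by
  simp only [pow_succ, pow_zero, one_mul, re_mul, im_mul]; ring

theorem isCoprime_self_star {α : GaussianInt} (hre_im : IsCoprime α.re α.im)
    (hodd : Odd α.norm) : IsCoprime α (star α) := by
  -- `(a - bi)α + (a + bi)ᾱ = 2(a re α + b im α) = 2`, and `2` is coprime to the odd `αᾱ`.
  obtain ⟨a, b, hab⟩ := hre_im
  have htwo : (⟨a, -b⟩ : GaussianInt) * α + ⟨a, b⟩ * star α = 2 := by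
    apply Zsqrtd.ext <;>
      simp only [re_mul, im_mul, re_star, im_star, re_add, im_add, re_ofNat, im_ofNat]
    · linear_combination 2 * hab
    · ring
  obtain ⟨k, hk⟩ := hodd
  have hcop : IsCoprime (2 : GaussianInt) (α * star α) := by
    rw [← norm_eq_mul_conj, hk]
    exact ⟨-k, 1, by push_cast; ring⟩
  obtain ⟨e, f, hef⟩ := hcop
  exact ⟨e * ⟨a, -b⟩ + f * star α, e * ⟨a, b⟩, by linear_combination e * htwo + hef⟩

theorem exists_pow_three_eq_of_mul_star_eq_pow_three {α c : GaussianInt}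
    (hcop : IsCoprime α (star α)) (h : α * star α = c ^ 3) : ∃ γ, γ ^ 3 = α := by
  obtain ⟨D, ζ, hζ⟩ := exists_associated_pow_of_mul_eq_pow' hcop h
  have h4 := pow_four_eq_one_of_isUnit ζ.isUnit
  -- `(D ζ³)³ = D³ ζ⁹ = D³ ζ`
  refine ⟨D * ζ ^ 3, ?_⟩
  rw [← hζ]
  linear_combination (D ^ 3 * ζ * (ζ ^ 4 + 1)) * h4

end GaussianInt

theorem parameterization_x_sq_add_y_sq_eq_z_cubed_general (x y z : ℤ)
    (hx : x ≠ 0) (hy : y ≠ 0)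
    (hgcd : Int.gcd (Int.gcd x y) z = 1) (h : x ^ 2 + y ^ 2 = z ^ 3) :
    ∃ u v : ℤ, Int.gcd u v = 1 ∧ u * v ≠ 0 ∧
      x = u * (u ^ 2 - 3 * v ^ 2) ∧ y = v * (3 * u ^ 2 - v ^ 2) ∧
      z = u ^ 2 + v ^ 2 := by
  have hxy : IsCoprime x y :=
    Int.isCoprime_iff_gcd_eq_one.mpr (Int.gcd_eq_one_of_sq_add_sq_eq_pow hgcd h)
  set α : GaussianInt := ⟨x, y⟩
  have hnorm : α.norm = z ^ 3 := by rw [GaussianInt.norm_eq_sq_add_sq, h]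
  have hcop : IsCoprime α (star α) := GaussianInt.isCoprime_self_star hxy
    (hnorm ▸ (Int.odd_of_sq_add_sq_eq_cube hxy h).pow)
  obtain ⟨γ, hγ⟩ := GaussianInt.exists_pow_three_eq_of_mul_star_eq_pow_three (c := z) hcop
    (by rw [← norm_eq_mul_conj, hnorm, Int.cast_pow])
  have hX : x = γ.re * (γ.re ^ 2 - 3 * γ.im ^ 2) := by rw [← GaussianInt.re_pow_three, hγ]
  have hY : y = γ.im * (3 * γ.re ^ 2 - γ.im ^ 2) := by rw [← GaussianInt.im_pow_three, hγ]
  have hZ : z = γ.re ^ 2 + γ.im ^ 2 := by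
    rw [← GaussianInt.norm_eq_sq_add_sq, ← (Odd.pow_inj (by decide : Odd 3)), ← hnorm, ← hγ]
    exact map_pow normMonoidHom γ 3
  refine ⟨γ.re, γ.im, ?_, ?_, hX, hY, hZ⟩
  · rw [hX, hY] at hxy
    exact Int.isCoprime_iff_gcd_eq_one.mp hxy.of_mul_left_left.of_mul_right_left
  · intro huv
    rcases mul_eq_zero.mp huv with h0 | h0
    · exact hx (by rw [hX, h0]; ring)
    · exact hy (by rw [hY, h0]; ring)

theorem parameterization_x_sq_add_y_sq_eq_z_cubed (x y z : ℤ)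
    (hx : x ≠ 0) (hy : y ≠ 0) (hz : z ≠ 0)
    (hgcd : Int.gcd (Int.gcd x y) z = 1) (h : x ^ 2 + y ^ 2 = z ^ 3) :
    ∃ u v : ℤ, Int.gcd u v = 1 ∧ u * v ≠ 0 ∧
      x = u * (u ^ 2 - 3 * v ^ 2) ∧ y = v * (3 * u ^ 2 - v ^ 2) ∧
      z = u ^ 2 + v ^ 2 :=
  parameterization_x_sq_add_y_sq_eq_z_cubed_general x y z hx hy hgcd h
end

section
/- Let l > 3 be prime, suppose (x,y,z) is a solution for exponent l, and let u, v, r, s be as in the descent: gcd(u,v) = 1, uv ≠ 0, 3 ∣ v, 2 ∣ uv, x = u(u² − 3v²), y^l = v(3u² − v²), z = u² + v², gcd(r,s) = 1, rs ≠ 0, 3v = r^l, 3u² − v² = 3s^l. Then in the ring ℤ[√3] there exist nonzero elements x₁, x₂ and a unit ε such that √3·u − v = √3·x₁^l·ε and √3·u + v = √3·x₂^l·ε⁻¹. -/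
/-!
Write `v = 3w` and `β = u + w√3`. The hypothesis `3u² - v² = 3sˡ` says `β · β̄ = N β = sˡ`, and
`√3 u ∓ v = √3 (u ∓ w√3)`. A common divisor of `β̄` and `β` divides `β̄ β = sˡ` and `β̄ + β = 2u`;
since `gcd(u, 3w) = 1` and one of `u, 3w` is even, `sˡ` is odd and prime to `u`, so `β̄` and `β`
are coprime. The ring `ℤ[√3]` is norm-Euclidean, so coprime factors of an `l`-th power are
`l`-th powers up to units, and comparing with `β̄ β = sˡ` lets one take the two units inverse
to each other.
-/

/-- A solution for exponent `n` of the generalized Fermat equation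
`x² + y^(2n) = z³` is a triple of nonzero integers `x, y, z` with
`gcd(x, y, z) = 1` satisfying the equation. -/
def IsSolution (n : ℕ) (x y z : ℤ) : Prop :=
  x ≠ 0 ∧ y ≠ 0 ∧ z ≠ 0 ∧ Int.gcd (Int.gcd x y) z = 1 ∧ x ^ 2 + y ^ (2 * n) = z ^ 3

/-- `√3` as an element of `ℤ[√3]`. -/
def sqrt3 : Zsqrtd 3 := ⟨0, 1⟩

theorem Int.two_mul_abs_sub_mul_round_le (a : ℤ) {n : ℤ} (hn : n ≠ 0) :
    2 * |a - n * round ((a : ℚ) / n)| ≤ |n| := by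
  have hnQ : (n : ℚ) ≠ 0 := by exact_mod_cast hn
  have hround := abs_sub_round ((a : ℚ) / n)
  have hscale : |(a : ℚ) - n * round ((a : ℚ) / n)| =
      |(n : ℚ)| * |(a : ℚ) / n - round ((a : ℚ) / n)| := by
    rw [← abs_mul, mul_sub, mul_div_cancel₀ _ hnQ]
  have h : 2 * |(a : ℚ) - n * round ((a : ℚ) / n)| ≤ |(n : ℚ)| := by
    rw [hscale]; nlinarith [abs_nonneg (n : ℚ)]
  exact_mod_cast h

theorem Int.abs_sq_sub_mul_sq_lt_sq {d e f n : ℤ} (hd₃ : -3 < d) (hd₄ : d < 4) (hn : n ≠ 0)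
    (he : 2 * |e| ≤ |n|) (hf : 2 * |f| ≤ |n|) : |e ^ 2 - d * f ^ 2| < n ^ 2 := by
  have he2 : 4 * e ^ 2 ≤ n ^ 2 := by
    rw [← sq_abs e, ← sq_abs n]; nlinarith [abs_nonneg e]
  have hf2 : 4 * f ^ 2 ≤ n ^ 2 := by
    rw [← sq_abs f, ← sq_abs n]; nlinarith [abs_nonneg f]
  have hn2 : 0 < n ^ 2 := by positivity
  rw [abs_lt]
  constructor <;> rcases le_or_gt 0 d with hd | hd <;> nlinarith [sq_nonneg e, sq_nonneg f]

theorem Int.odd_sq_sub_mul_sq {u w d : ℤ} (hcop : IsCoprime u (d * w)) (h2 : 2 ∣ u * (d * w)) :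
    Odd (u ^ 2 - d * w ^ 2) := by
  have hnot : ¬(Even u ∧ Even (d * w)) := fun ⟨hu, hv⟩ => by
    have := hcop.isUnit_of_dvd' hu.two_dvd hv.two_dvd
    norm_num [Int.isUnit_iff] at this
  rw [← even_iff_two_dvd] at h2
  simp only [parity_simps, ← Int.not_even_iff_odd] at h2 hnot ⊢
  tauto

theorem IsCoprime.sq_sub_mul_sq {R : Type*} [CommRing R] {u w d : R} (h : IsCoprime u (d * w)) :
    IsCoprime (u ^ 2 - d * w ^ 2) u := by
  have h' : IsCoprime (d * w * w) u := h.symm.mul_left h.of_mul_right_right.symm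
  rw [show u ^ 2 - d * w ^ 2 = -(d * w * w) + u * u by ring]
  exact h'.neg_left.add_mul_left_left u

theorem exists_pow_mul_unit_of_mul_eq_pow {R : Type*} [CommRing R] [IsDomain R] [IsBezout R]
    {a b c : R} (hab : IsCoprime a b) (hc : c ≠ 0) {k : ℕ} (hk : k ≠ 0) (h : a * b = c ^ k) :
    ∃ x y : R, x ≠ 0 ∧ y ≠ 0 ∧ ∃ ε : Rˣ, a = x ^ k * ε ∧ b = y ^ k * ↑ε⁻¹ := by
  classical
  let := IsBezout.toGCDDomain R
  obtain ⟨x, ε, hx⟩ := exists_associated_pow_of_mul_eq_pow' hab h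
  obtain ⟨y, rfl⟩ : x ∣ c :=
    (IsIntegrallyClosed.pow_dvd_pow_iff hk).mp ⟨ε * b, by rw [← h, ← hx, mul_assoc]⟩
  have hx0 : x ≠ 0 := left_ne_zero_of_mul hc
  refine ⟨x, y, hx0, right_ne_zero_of_mul hc, ε, hx.symm, ?_⟩
  rw [Units.eq_mul_inv_iff_mul_eq]
  refine mul_left_cancel₀ (pow_ne_zero k hx0) ?_
  rw [← mul_pow, ← h, ← hx]
  ring

namespace Zsqrtd

variable {d : ℤ}

def roundDiv (x y : ℤ√d) : ℤ√d :=
  ⟨round (((x * star y).re : ℚ) / y.norm), round (((x * star y).im : ℚ) / y.norm)⟩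

theorem natAbs_norm_sub_mul_roundDiv_lt (hd : ∀ n : ℤ, d ≠ n * n) (hd₃ : -3 < d) (hd₄ : d < 4)
    (x : ℤ√d) {y : ℤ√d} (hy : y ≠ 0) : (x - y * roundDiv x y).norm.natAbs < y.norm.natAbs := by
  have hN : y.norm ≠ 0 := (norm_eq_zero hd y).not.mpr hy
  have hconj : (x - y * roundDiv x y) * star y =
      ⟨(x * star y).re - y.norm * (roundDiv x y).re,
        (x * star y).im - y.norm * (roundDiv x y).im⟩ := by
    rw [sub_mul, mul_right_comm, ← norm_eq_mul_conj]
    ext <;> simp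
  have hnorm : (x - y * roundDiv x y).norm * y.norm =
      ((x * star y).re - y.norm * (roundDiv x y).re) ^ 2 -
        d * ((x * star y).im - y.norm * (roundDiv x y).im) ^ 2 := by
    have h := congrArg norm hconj
    rw [norm_mul, norm_conj] at h
    rw [h, norm_def]; ring
  have hlt := Int.abs_sq_sub_mul_sq_lt_sq hd₃ hd₄ hN
    (Int.two_mul_abs_sub_mul_round_le (x * star y).re hN)
    (Int.two_mul_abs_sub_mul_round_le (x * star y).im hN)
  simp only [roundDiv] at hnorm
  rw [← hnorm, abs_mul, ← sq_abs y.norm, sq] at hlt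
  zify
  exact lt_of_mul_lt_mul_right hlt (abs_nonneg _)

theorem natAbs_norm_le_natAbs_norm_mul (hd : ∀ n : ℤ, d ≠ n * n) (x : ℤ√d) {y : ℤ√d}
    (hy : y ≠ 0) : x.norm.natAbs ≤ (x * y).norm.natAbs := by
  rw [norm_mul, Int.natAbs_mul]
  exact Nat.le_mul_of_pos_right _ (Int.natAbs_pos.mpr ((norm_eq_zero hd y).not.mpr hy))

/-- `ℤ√d` is norm-Euclidean for `d ∈ {-2, -1, 2, 3}`: rounding the coordinates of the exact
quotient leaves errors `s, t` with `|s|, |t| ≤ 1/2`, and then `|s² - d t²| < 1`. -/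
noncomputable abbrev euclideanDomain (hd : ∀ n : ℤ, d ≠ n * n) (hd₃ : -3 < d) (hd₄ : d < 4) :
    EuclideanDomain (ℤ√d) where
  __ := Zsqrtd.commRing
  __ := Zsqrtd.nontrivial
  quotient := roundDiv
  quotient_zero x := by simp [roundDiv]; rfl
  remainder x y := x - y * roundDiv x y
  quotient_mul_add_remainder_eq x y := add_sub_cancel _ _
  r := InvImage (· < ·) fun x => x.norm.natAbs
  r_wellFounded := (measure _).wf
  remainder_lt x y hy := natAbs_norm_sub_mul_roundDiv_lt hd hd₃ hd₄ x hy
  mul_left_not_lt x y hy := (natAbs_norm_le_natAbs_norm_mul hd x hy).not_gt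

/-- A common divisor of `z` and `star z` divides `z * star z = N z` and `z + star z = 2 re z`. -/
theorem isCoprime_self_star {z : ℤ√d} (h : IsCoprime z.norm (2 * z.re)) :
    IsCoprime z (star z) := by
  have h' := h.map (Int.castRingHom (ℤ√d))
  have hre : ((2 * z.re : ℤ) : ℤ√d) = star z + z * 1 := by ext <;> simp; ring
  simp only [eq_intCast, norm_eq_mul_conj] at h'
  rw [hre] at h'
  exact h'.of_mul_left_left.of_add_mul_left_right

end Zsqrtd

noncomputable instance : EuclideanDomain (ℤ√3) :=
  Zsqrtd.euclideanDomain (fun n h => by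
    have : n ≤ 2 := by nlinarith
    have : -2 ≤ n := by nlinarith
    interval_cases n <;> omega) (by norm_num) (by norm_num)

theorem sqrt3_mul_sub_three_mul (u w : ℤ) :
    sqrt3 * (u : ℤ√3) - ((3 * w : ℤ) : ℤ√3) = sqrt3 * star ⟨u, w⟩ := by
  ext <;> simp [sqrt3]

theorem sqrt3_mul_add_three_mul (u w : ℤ) :
    sqrt3 * (u : ℤ√3) + ((3 * w : ℤ) : ℤ√3) = sqrt3 * ⟨u, w⟩ := by
  ext <;> simp [sqrt3]

theorem descent_in_Z_sqrt3_general (l : ℕ) (hl : l.Prime)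
    (u v r s : ℤ)
    (hgcd : Int.gcd u v = 1) (h3v : 3 ∣ v) (h2uv : 2 ∣ u * v)
    (hrs0 : r * s ≠ 0)
    (hs : 3 * u ^ 2 - v ^ 2 = 3 * s ^ l) :
    ∃ x₁ x₂ : Zsqrtd 3, x₁ ≠ 0 ∧ x₂ ≠ 0 ∧ ∃ ε : (Zsqrtd 3)ˣ,
      sqrt3 * (u : Zsqrtd 3) - (v : Zsqrtd 3) = sqrt3 * x₁ ^ l * (ε : Zsqrtd 3) ∧
      sqrt3 * (u : Zsqrtd 3) + (v : Zsqrtd 3) = sqrt3 * x₂ ^ l * ((ε⁻¹ : (Zsqrtd 3)ˣ) : Zsqrtd 3) := by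
  obtain ⟨w, rfl⟩ := h3v
  have hcop : IsCoprime u (3 * w) := Int.isCoprime_iff_gcd_eq_one.mpr hgcd
  have hnorm_eq : (⟨u, w⟩ : ℤ√3).norm = u ^ 2 - 3 * w ^ 2 := by
    rw [Zsqrtd.norm_def]; ring
  have hcoprime : IsCoprime (star ⟨u, w⟩) (⟨u, w⟩ : ℤ√3) := by
    refine (Zsqrtd.isCoprime_self_star ?_).symm
    rw [hnorm_eq]
    exact (Int.isCoprime_two_right.mpr (Int.odd_sq_sub_mul_sq hcop h2uv)).mul_right
      hcop.sq_sub_mul_sq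
  have hprod : star ⟨u, w⟩ * (⟨u, w⟩ : ℤ√3) = (s : ℤ√3) ^ l := by
    rw [mul_comm, ← Zsqrtd.norm_eq_mul_conj, hnorm_eq, show u ^ 2 - 3 * w ^ 2 = s ^ l by linarith,
      Int.cast_pow]
  have hs0 : (s : ℤ√3) ≠ 0 := Int.cast_ne_zero.mpr (right_ne_zero_of_mul hrs0)
  obtain ⟨x₁, x₂, hx₁, hx₂, ε, h₁, h₂⟩ :=
    exists_pow_mul_unit_of_mul_eq_pow hcoprime hs0 hl.ne_zero hprod
  refine ⟨x₁, x₂, hx₁, hx₂, ε, ?_, ?_⟩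
  · rw [sqrt3_mul_sub_three_mul, h₁, mul_assoc]
  · rw [sqrt3_mul_add_three_mul, h₂, mul_assoc]

theorem descent_in_Z_sqrt3 (l : ℕ) (hl : l.Prime) (hl3 : 3 < l)
    (x y z u v r s : ℤ) (h : IsSolution l x y z)
    (hgcd : Int.gcd u v = 1) (huv : u * v ≠ 0) (h3v : 3 ∣ v) (h2uv : 2 ∣ u * v)
    (hx : x = u * (u ^ 2 - 3 * v ^ 2)) (hy : y ^ l = v * (3 * u ^ 2 - v ^ 2))
    (hz : z = u ^ 2 + v ^ 2)
    (hrs : Int.gcd r s = 1) (hrs0 : r * s ≠ 0)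
    (hr : 3 * v = r ^ l) (hs : 3 * u ^ 2 - v ^ 2 = 3 * s ^ l) :
    ∃ x₁ x₂ : Zsqrtd 3, x₁ ≠ 0 ∧ x₂ ≠ 0 ∧ ∃ ε : (Zsqrtd 3)ˣ,
      sqrt3 * (u : Zsqrtd 3) - (v : Zsqrtd 3) = sqrt3 * x₁ ^ l * (ε : Zsqrtd 3) ∧
      sqrt3 * (u : Zsqrtd 3) + (v : Zsqrtd 3) = sqrt3 * x₂ ^ l * ((ε⁻¹ : (Zsqrtd 3)ˣ) : Zsqrtd 3) :=
  descent_in_Z_sqrt3_general l hl u v r s hgcd h3v h2uv hrs0 hs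
end

section
/- The only rational numbers X, Y satisfying 1728·Y² = X³ + 22·X² + 125·X are X = 0 and Y = 0. -/
/-!
With `x = 3X`, `y = 216Y` the curve becomes `E : y² = x³ + 66x² + 1125x`, and `x ≠ 0` forces
`x > 0` because `x² + 66x + 1125 > 0`. `E` is 2-isogenous to `y² = x³ - 132x² - 144x`, and the
proof is the 2-isogeny descent, run as an infinite descent between the quartics
`C : b² = a⁴ + 66a²t² + 1125t⁴` and `C' : w² = k⁴ - 132k²v² - 144v⁴`.

A point of `E` with `x > 0` has `x = e a² / t²` with `e ∣ 1125` squarefree; `e = 3, 15` are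
excluded 3-adically and `e = 1, 5` both give a point of `C` with `t ≠ 0`. Parametrising the
Pythagorean triple `(a² + 33t², 6t², b)` and discarding the cases that fail mod 3 and mod 8
leaves a point of `C'` with `v ≠ 0` and `k⁸ ≤ b²`. Conversely a point `(u, z, w)` of `C'` with
`z ≠ 0` gives a point of `E` with `x > 0` so small that the resulting point of `C` has `b² < u⁸`,
hence a point of `C'` with `|k| < |u|`.
-/

lemma exists_eq_sq_of_sq_eq_pow_three {q s : ℤ} (hq : q ≠ 0) (h : s ^ 2 = q ^ 3) :
    ∃ T, q = T ^ 2 := by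
  obtain ⟨T, rfl⟩ : q ∣ s := (Int.pow_dvd_pow_iff two_ne_zero).mp ⟨q, by rw [h]; ring⟩
  exact ⟨T, mul_left_cancel₀ (pow_ne_zero 2 hq) (by linear_combination -h)⟩

theorem exists_den_eq_sq_of_sq_eq_cubic (A B : ℤ) {x y : ℚ}
    (h : y ^ 2 = x ^ 3 + A * x ^ 2 + B * x) :
    ∃ T : ℤ, (x.den : ℤ) = T ^ 2 ∧
      x.num * (x.num ^ 2 + A * x.num * T ^ 2 + B * T ^ 4) = y.num ^ 2 := by
  set P := x.num
  set q : ℤ := (x.den : ℤ)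
  have hq : 0 < q := by positivity
  set M := P * (P ^ 2 + A * P * q + B * q ^ 2)
  have hcop : IsCoprime M (q ^ 3) := by
    have hPq : IsCoprime P q := x.isCoprime_num_den
    have hNq : IsCoprime (P ^ 2 + A * P * q + B * q ^ 2) q := by
      rw [show P ^ 2 + A * P * q + B * q ^ 2 = P ^ 2 + q * (A * P + B * q) by ring]
      exact hPq.pow_left.add_mul_left_left _
    exact (hPq.mul_left hNq).pow_right
  have hy : y ^ 2 = (M : ℚ) / (q ^ 3 : ℤ) := by
    rw [h, ← Rat.num_div_den x]
    push_cast [M, P, q]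
    field_simp
  have hcop' := Int.isCoprime_iff_gcd_eq_one.mp hcop
  have hnum := Rat.num_div_eq_of_coprime (by positivity) hcop'
  have hden := Rat.den_div_eq_of_coprime (by positivity) hcop'
  rw [← hy, Rat.num_pow] at hnum
  rw [← hy, Rat.den_pow] at hden
  obtain ⟨T, hT⟩ := exists_eq_sq_of_sq_eq_pow_three (s := y.den) hq.ne' (by exact_mod_cast hden)
  refine ⟨T, hT, ?_⟩
  rw [hnum]
  simp only [M, hT]
  ring

lemma exists_sq_of_isCoprime_of_mul_eq_sq {m n t : ℤ} (hmn : IsCoprime m n) (hm : 0 < m)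
    (h : m * n = t ^ 2) : ∃ k, m = k ^ 2 := by
  obtain ⟨k, hk | hk⟩ := Int.sq_of_isCoprime hmn h
  · exact ⟨k, hk⟩
  · nlinarith [sq_nonneg k]

lemma exists_eq_gcd_mul_sq_of_mul_eq_sq {P N r : ℤ} (hP : 0 < P) (hN : 0 < N)
    (h : P * N = r ^ 2) :
    ∃ α β : ℤ, P = Int.gcd P N * α ^ 2 ∧ N = Int.gcd P N * β ^ 2 := by
  have hg : 0 < Int.gcd P N := Int.gcd_pos_of_ne_zero_left N hP.ne'
  obtain ⟨P₁, N₁, hco, hP₁, hN₁⟩ := Int.exists_gcd_one hg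
  set g : ℤ := (Int.gcd P N : ℤ)
  have hg' : 0 < g := by positivity
  obtain ⟨r₁, rfl⟩ : g ∣ r :=
    (Int.pow_dvd_pow_iff two_ne_zero).mp ⟨P₁ * N₁, by rw [← h, hP₁, hN₁]; ring⟩
  have hco' := Int.isCoprime_iff_gcd_eq_one.mpr hco
  have hPN : P₁ * N₁ = r₁ ^ 2 :=
    mul_left_cancel₀ (pow_ne_zero 2 hg'.ne') (by rw [hP₁, hN₁] at h; linear_combination h)
  obtain ⟨α, hα⟩ := exists_sq_of_isCoprime_of_mul_eq_sq hco' (by nlinarith) hPN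
  obtain ⟨β, hβ⟩ := exists_sq_of_isCoprime_of_mul_eq_sq hco'.symm (by nlinarith)
    (by rw [mul_comm]; exact hPN)
  exact ⟨α, β, by rw [hP₁, hα, mul_comm], by rw [hN₁, hβ, mul_comm]⟩

lemma gcd_dvd_coeff_of_isCoprime {P T : ℤ} (A B : ℤ) (hPT : IsCoprime P T) :
    (Int.gcd P (P ^ 2 + A * P * T ^ 2 + B * T ^ 4) : ℤ) ∣ B := by
  have hgP := Int.gcd_dvd_left P (P ^ 2 + A * P * T ^ 2 + B * T ^ 4)
  have hgN := Int.gcd_dvd_right P (P ^ 2 + A * P * T ^ 2 + B * T ^ 4)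
  have hgT : IsCoprime (Int.gcd P (P ^ 2 + A * P * T ^ 2 + B * T ^ 4) : ℤ) (T ^ 4) :=
    (hPT.of_isCoprime_of_dvd_left hgP).pow_right
  refine hgT.dvd_of_dvd_mul_right ?_
  have := dvd_sub hgN (hgP.mul_right (P + A * T ^ 2))
  rwa [show P ^ 2 + A * P * T ^ 2 + B * T ^ 4 - P * (P + A * T ^ 2) = B * T ^ 4 by ring] at this

set_option maxRecDepth 10000 in
lemma exists_sq_mul_of_dvd_1125 {g : ℕ} (hg : g ∣ 1125) :
    ∃ c e : ℕ, g = c ^ 2 * e ∧ (e = 1 ∨ e = 3 ∨ e = 5 ∨ e = 15) := by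
  have key : ∀ g ∈ Nat.divisors 1125, ∃ c ∈ Finset.range 16,
      ∃ e ∈ ({1, 3, 5, 15} : Finset ℕ), g = c ^ 2 * e := by
    decide
  obtain ⟨c, -, e, he, rfl⟩ := key g (Nat.mem_divisors.mpr ⟨hg, by norm_num⟩)
  exact ⟨c, e, rfl, by simpa using he⟩

lemma three_dvd_of_mul_sq_eq {a b T e : ℤ} (he : e = 3 ∨ e = 15)
    (h : e * b ^ 2 = e ^ 2 * a ^ 4 + 66 * e * a ^ 2 * T ^ 2 + 1125 * T ^ 4) : 3 ∣ T := by
  suffices ((3 * T : ℤ) : ZMod 9) = 0 by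
    have := (ZMod.intCast_zmod_eq_zero_iff_dvd _ 9).mp this
    omega
  rcases he with rfl | rfl
  · have h' : b ^ 2 = 3 * a ^ 4 + 66 * a ^ 2 * T ^ 2 + 375 * T ^ 4 := by linarith
    have key : ∀ a b T : ZMod 9, b ^ 2 = 3 * a ^ 4 + 66 * a ^ 2 * T ^ 2 + 375 * T ^ 4 →
      3 * T = 0 := by decide
    push_cast
    exact key a b T (by exact_mod_cast congrArg (Int.cast : ℤ → ZMod 9) h')
  · have h' : b ^ 2 = 15 * a ^ 4 + 66 * a ^ 2 * T ^ 2 + 75 * T ^ 4 := by linarith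
    have key : ∀ a b T : ZMod 9, b ^ 2 = 15 * a ^ 4 + 66 * a ^ 2 * T ^ 2 + 75 * T ^ 4 →
      3 * T = 0 := by decide
    push_cast
    exact key a b T (by exact_mod_cast congrArg (Int.cast : ℤ → ZMod 9) h')

theorem exists_quartic_of_mul_eq_sq {P T r : ℤ} (hP : 0 < P) (hT : T ≠ 0) (hPT : IsCoprime P T)
    (h : P * (P ^ 2 + 66 * P * T ^ 2 + 1125 * T ^ 4) = r ^ 2) :
    ∃ a t b : ℤ, t ≠ 0 ∧ b ^ 2 = a ^ 4 + 66 * a ^ 2 * t ^ 2 + 1125 * t ^ 4 ∧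
      b ^ 2 ≤ 45 * (P ^ 2 + 66 * P * T ^ 2 + 1125 * T ^ 4) := by
  set N := P ^ 2 + 66 * P * T ^ 2 + 1125 * T ^ 4 with hN_def
  have hN : 0 < N := by
    nlinarith [mul_pos hP hP, mul_nonneg hP.le (sq_nonneg T), pow_nonneg (sq_nonneg T) 2]
  obtain ⟨α, β, hα, hβ⟩ := exists_eq_gcd_mul_sq_of_mul_eq_sq hP hN h
  obtain ⟨c, e, hce, he⟩ :=
    exists_sq_mul_of_dvd_1125 (Int.natCast_dvd_natCast.mp (gcd_dvd_coeff_of_isCoprime 66 1125 hPT))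
  rw [hce] at hα hβ
  push_cast at hα hβ
  obtain ⟨a, hPa⟩ : ∃ a : ℤ, P = e * a ^ 2 := ⟨c * α, by rw [hα]; ring⟩
  obtain ⟨b, hNb⟩ : ∃ b : ℤ, N = e * b ^ 2 := ⟨c * β, by rw [hβ]; ring⟩
  have key : (e : ℤ) * b ^ 2 = e ^ 2 * a ^ 4 + 66 * e * a ^ 2 * T ^ 2 + 1125 * T ^ 4 := by
    linear_combination hN_def - hNb + (P + e * a ^ 2 + 66 * T ^ 2) * hPa
  have ha : a ≠ 0 := by rintro rfl; simp at hPa; omega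
  obtain rfl | rfl | h3e : e = 1 ∨ e = 5 ∨ (e = 3 ∨ e = 15) := by omega
  · exact ⟨a, T, b, hT, by linear_combination key, by push_cast at hNb; linarith⟩
  · -- Translation by the 2-torsion point, `x ↦ 1125 / x`, sends `5a² / T²` to `(15T)² / a²`.
    refine ⟨15 * T, a, 15 * b, ha, by linear_combination 45 * key, ?_⟩
    push_cast at hNb
    linarith
  · have h3e' : (e : ℤ) = 3 ∨ (e : ℤ) = 15 := by exact_mod_cast h3e
    have h3P : (3 : ℤ) ∣ P :=
      hPa ▸ Dvd.dvd.mul_right (by rcases h3e' with h | h <;> rw [h]; norm_num) _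
    have := Int.isUnit_iff.mp (hPT.isUnit_of_dvd' h3P (three_dvd_of_mul_sq_eq h3e' key))
    omega

lemma odd_add_of_sq_eq_quartic {a t b : ℤ} (hat : IsCoprime a t)
    (h : b ^ 2 = a ^ 4 + 66 * a ^ 2 * t ^ 2 + 1125 * t ^ 4) : Odd (a + t) := by
  rcases Int.even_or_odd a with ha | ha <;> rcases Int.even_or_odd t with ht | ht
  · have := Int.isUnit_iff.mp (hat.isUnit_of_dvd' ha.two_dvd ht.two_dvd)
    omega
  · exact ha.add_odd ht
  · exact ha.add_even ht
  · obtain ⟨A, rfl⟩ := ha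
    obtain ⟨T, rfl⟩ := ht
    have key : ∀ A T b : ZMod 16, b ^ 2 ≠
        (2 * A + 1) ^ 4 + 66 * (2 * A + 1) ^ 2 * (2 * T + 1) ^ 2 + 1125 * (2 * T + 1) ^ 4 := by
      decide
    exact absurd (by exact_mod_cast congrArg (Int.cast : ℤ → ZMod 16) h) (key A T b)

lemma IsCoprime.add_mul_sq {R : Type*} [CommRing R] {x t : R} (d : R) (h : IsCoprime x t) :
    IsCoprime (x + d * t ^ 2) (t ^ 2) := by
  rw [show x + d * t ^ 2 = x + t * (d * t) by ring]
  exact (h.add_mul_left_left _).pow_right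

lemma exists_pos_param_of_sq_add_sq_eq_sq {x y z : ℤ} (h : x ^ 2 + y ^ 2 = z ^ 2)
    (hxy : IsCoprime x y) (hx : Odd x) (hy : 0 < y) :
    ∃ m n : ℤ, 0 < m ∧ 0 < n ∧ IsCoprime m n ∧ x = m ^ 2 - n ^ 2 ∧ y = 2 * m * n ∧
      z ^ 2 = (m ^ 2 + n ^ 2) ^ 2 := by
  have hz : 0 < |z| := abs_pos.mpr (by rintro rfl; nlinarith)
  have hpyth : PythagoreanTriple x y |z| := by
    unfold PythagoreanTriple
    linear_combination h + (sq_abs z).symm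
  obtain ⟨m, n, hx', hy', hz', hmn, -, hm⟩ := hpyth.coprime_classification'
    (Int.isCoprime_iff_gcd_eq_one.mp hxy) (Int.odd_iff.mp hx) hz
  have hm' : 0 < m := lt_of_le_of_ne hm (by rintro rfl; simp at hy'; omega)
  refine ⟨m, n, hm', by nlinarith, Int.isCoprime_iff_gcd_eq_one.mpr hmn, hx', hy', ?_⟩
  rw [← hz', sq_abs]

lemma not_three_dvd_of_sq_eq_quartic {a t b : ℤ} (hat : IsCoprime a t)
    (h : b ^ 2 = a ^ 4 + 66 * a ^ 2 * t ^ 2 + 1125 * t ^ 4) : ¬ 3 ∣ a := by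
  have hodd := odd_add_of_sq_eq_quartic hat h
  rintro ⟨a, rfl⟩
  have h3t : IsCoprime 3 t := hat.of_mul_left_left
  have ht : t ≠ 0 := by
    rintro rfl
    exact Int.prime_three.not_isUnit (isCoprime_zero_right.mp h3t)
  obtain ⟨b, rfl⟩ : (3 : ℤ) ∣ b := Int.prime_three.dvd_of_dvd_pow (n := 2)
    ⟨27 * a ^ 4 + 198 * a ^ 2 * t ^ 2 + 375 * t ^ 4, by linear_combination h⟩
  have hb : b ^ 2 = 9 * a ^ 4 + 66 * a ^ 2 * t ^ 2 + 125 * t ^ 4 := by linarith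
  have hx : Odd (3 * a ^ 2 + 11 * t ^ 2) := by
    simpa [← Int.not_even_iff_odd, parity_simps, (by decide : ¬ Even (3 : ℤ)),
      (by decide : ¬ Even (11 : ℤ))] using hodd
  have hxt := (h3t.mul_left (hat.of_mul_left_right.pow_left (m := 2))).add_mul_sq 11
  obtain ⟨m, n, -, -, hmn, hxmn, hymn, -⟩ := exists_pos_param_of_sq_add_sq_eq_sq (z := b)
    (by linear_combination -hb) ((Int.isCoprime_two_right.mpr hx).mul_right hxt) hx (by positivity)
  have key : ∀ A m n : ZMod 3, 3 * A ^ 2 + 11 * (m * n) = m ^ 2 - n ^ 2 → m = 0 ∧ n = 0 := by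
    decide
  have htmn : t ^ 2 = m * n := by linarith
  have hmod : 3 * a ^ 2 + 11 * (m * n) = m ^ 2 - n ^ 2 := by linear_combination hxmn - 11 * htmn
  obtain ⟨hm, hn⟩ := key a m n (by exact_mod_cast congrArg (Int.cast : ℤ → ZMod 3) hmod)
  exact Int.prime_three.not_isUnit (hmn.isUnit_of_dvd'
    ((ZMod.intCast_zmod_eq_zero_iff_dvd m 3).mp hm) ((ZMod.intCast_zmod_eq_zero_iff_dvd n 3).mp hn))

theorem exists_quartic'_of_quartic_of_isCoprime {a t b : ℤ} (hat : IsCoprime a t) (ht : t ≠ 0)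
    (h : b ^ 2 = a ^ 4 + 66 * a ^ 2 * t ^ 2 + 1125 * t ^ 4) :
    ∃ k v w : ℤ,
      w ^ 2 = k ^ 4 - 132 * k ^ 2 * v ^ 2 - 144 * v ^ 4 ∧ v ≠ 0 ∧ k ^ 8 ≤ b ^ 2 := by
  have h3a := not_three_dvd_of_sq_eq_quartic hat h
  have hx : Odd (a ^ 2 + 33 * t ^ 2) := by
    simpa [← Int.not_even_iff_odd, parity_simps, (by decide : ¬ Even (33 : ℤ))]
      using odd_add_of_sq_eq_quartic hat h
  have hx3 : IsCoprime 3 (a ^ 2 + 33 * t ^ 2) := by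
    refine (Prime.coprime_iff_not_dvd Int.prime_three).mpr fun h3 => h3a ?_
    exact Int.prime_three.dvd_of_dvd_pow (n := 2)
      ((dvd_add_left (Dvd.dvd.mul_right (by norm_num) _)).mp h3)
  have hxt := (hat.pow_left (m := 2)).add_mul_sq 33
  have hco : IsCoprime (a ^ 2 + 33 * t ^ 2) (6 * t ^ 2) := by
    rw [show (6 : ℤ) * t ^ 2 = 2 * (3 * t ^ 2) by ring]
    exact (Int.isCoprime_two_right.mpr hx).mul_right (hx3.symm.mul_right hxt)
  obtain ⟨m, n, hm, hn, hmn, hxmn, hymn, hz⟩ :=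
    exists_pos_param_of_sq_add_sq_eq_sq (z := b) (by linear_combination -h) hco hx (by positivity)
  have h3mn : 3 * t ^ 2 = m * n := by linarith
  rcases Int.prime_three.dvd_or_dvd ⟨t ^ 2, h3mn.symm⟩ with ⟨m, rfl⟩ | ⟨n, rfl⟩
  · have key : ∀ a t m n : ZMod 3, a ^ 2 + 33 * t ^ 2 = (3 * m) ^ 2 - n ^ 2 → a = 0 := by
      decide
    have := key a t m n (by exact_mod_cast congrArg (Int.cast : ℤ → ZMod 3) hxmn)
    exact absurd ((ZMod.intCast_zmod_eq_zero_iff_dvd a 3).mp this) h3a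
  have hmt : m * n = t ^ 2 := by linarith
  obtain ⟨k, rfl⟩ := exists_sq_of_isCoprime_of_mul_eq_sq hmn.of_mul_right_right hm hmt
  obtain ⟨l, rfl⟩ := exists_sq_of_isCoprime_of_mul_eq_sq hmn.of_mul_right_right.symm
    (by linarith) (by rw [mul_comm]; exact hmt)
  have ha : a ^ 2 = k ^ 4 - 33 * k ^ 2 * l ^ 2 - 9 * l ^ 4 := by
    linear_combination hxmn + 33 * hmt
  rcases Int.even_or_odd l with ⟨v, rfl⟩ | ⟨L, rfl⟩
  · refine ⟨k, v, a, by linear_combination ha, by rintro rfl; simp at hn, ?_⟩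
    rw [hz]
    nlinarith [pow_nonneg (sq_nonneg k) 2, sq_nonneg (3 * (v + v) ^ 2)]
  · have key : ∀ a k L : ZMod 8,
        a ^ 2 ≠ k ^ 4 - 33 * k ^ 2 * (2 * L + 1) ^ 2 - 9 * (2 * L + 1) ^ 4 := by
      decide
    exact absurd (by exact_mod_cast congrArg (Int.cast : ℤ → ZMod 8) ha) (key a k L)

theorem exists_quartic'_of_quartic {a t b : ℤ} (ht : t ≠ 0)
    (h : b ^ 2 = a ^ 4 + 66 * a ^ 2 * t ^ 2 + 1125 * t ^ 4) :
    ∃ k v w : ℤ,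
      w ^ 2 = k ^ 4 - 132 * k ^ 2 * v ^ 2 - 144 * v ^ 4 ∧ v ≠ 0 ∧ k ^ 8 ≤ b ^ 2 := by
  obtain ⟨g, a, t, hg, hat, rfl, rfl⟩ := Int.exists_gcd_one' (Int.gcd_pos_of_ne_zero_right a ht)
  have hg' : (0 : ℤ) < g := by exact_mod_cast hg
  obtain ⟨b, rfl⟩ : (g : ℤ) ^ 2 ∣ b := (Int.pow_dvd_pow_iff two_ne_zero).mp
    ⟨a ^ 4 + 66 * a ^ 2 * t ^ 2 + 1125 * t ^ 4, by rw [h]; ring⟩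
  have hb : b ^ 2 = a ^ 4 + 66 * a ^ 2 * t ^ 2 + 1125 * t ^ 4 :=
    mul_left_cancel₀ (pow_ne_zero 4 hg'.ne') (by linear_combination h)
  obtain ⟨k, v, w, hkvw, hv, hk⟩ := exists_quartic'_of_quartic_of_isCoprime
    (Int.isCoprime_iff_gcd_eq_one.mpr hat) (by rintro rfl; simp at ht) hb
  refine ⟨k, v, w, hkvw, hv, hk.trans ?_⟩
  have : (1 : ℤ) ≤ (g : ℤ) ^ 4 := one_le_pow₀ hg'
  nlinarith [sq_nonneg b]

theorem exists_quartic'_of_sq_eq_cubic {x y : ℚ} (h : y ^ 2 = x ^ 3 + 66 * x ^ 2 + 1125 * x)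
    (hx : 0 < x) :
    ∃ k v w : ℤ, w ^ 2 = k ^ 4 - 132 * k ^ 2 * v ^ 2 - 144 * v ^ 4 ∧ v ≠ 0 ∧
      k ^ 8 ≤ 45 * (x.num ^ 2 + 66 * x.num * x.den + 1125 * x.den ^ 2) := by
  obtain ⟨T, hT, hr⟩ := exists_den_eq_sq_of_sq_eq_cubic 66 1125 (by exact_mod_cast h)
  have hT0 : T ≠ 0 := by rintro rfl; simp at hT
  have hPT : IsCoprime x.num T := (IsCoprime.pow_right_iff two_pos).mp (hT ▸ x.isCoprime_num_den)
  obtain ⟨a, t, b, ht, hb, hbound⟩ :=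
    exists_quartic_of_mul_eq_sq (Rat.num_pos.mpr hx) hT0 hPT hr
  obtain ⟨k, v, w, hkvw, hv, hk⟩ := exists_quartic'_of_quartic ht hb
  refine ⟨k, v, w, hkvw, hv, hk.trans (hbound.trans_eq ?_)⟩
  rw [hT]
  ring

theorem exists_sq_eq_cubic_of_quartic' {u z w : ℤ}
    (h : w ^ 2 = u ^ 4 - 132 * u ^ 2 * z ^ 2 - 144 * z ^ 4) (hz : z ≠ 0) :
    ∃ x y : ℚ, y ^ 2 = x ^ 3 + 66 * x ^ 2 + 1125 * x ∧ 0 < x ∧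
      45 * (x.num ^ 2 + 66 * x.num * x.den + 1125 * x.den ^ 2) < u ^ 8 := by
  set s := u ^ 2 - 66 * z ^ 2
  have hsw : s ^ 2 - w ^ 2 = 4500 * z ^ 4 := by linear_combination -h
  have hz2 : 0 < z ^ 2 := by positivity
  have hu : 132 * z ^ 2 < u ^ 2 := by nlinarith [sq_nonneg w, pow_pos hz2 2]
  have hs : 0 < s := by linarith
  set p := s + w
  set q := 2 * z ^ 2
  have hp : 0 < p := by nlinarith
  have hq : 0 < q := by positivity
  have hN : p ^ 2 + 66 * p * q + 1125 * q ^ 2 = 2 * p * u ^ 2 := by linear_combination h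
  have hpu : p < 2 * u ^ 2 := by nlinarith
  -- `p / q` is a root of `X² + (66 - u²/z²) X + 1125`, whose discriminant is `(w / z²)²`.
  refine ⟨p / q, p / q * u / z, ?_, by positivity, ?_⟩
  · have hN' : (p : ℚ) ^ 2 + 66 * p * q + 1125 * q ^ 2 = 2 * p * u ^ 2 := by exact_mod_cast hN
    have hz' : (z : ℚ) ≠ 0 := by exact_mod_cast hz
    simp only [q] at hN' ⊢
    push_cast at hN' ⊢
    field_simp
    linear_combination -hN'
  · have hx : (p / q : ℚ) = Rat.divInt p q := (Rat.divInt_eq_div p q).symm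
    have hnum : (p / q : ℚ).num ≤ p := hx ▸ Int.le_of_dvd hp (Rat.num_dvd p hq.ne')
    have hden : ((p / q : ℚ).den : ℤ) ≤ q := hx ▸ Int.le_of_dvd hq (Rat.den_dvd p q)
    have hnum0 : 0 < (p / q : ℚ).num := Rat.num_pos.mpr (by positivity)
    calc 45 * ((p / q : ℚ).num ^ 2 + 66 * (p / q : ℚ).num * (p / q : ℚ).den
          + 1125 * ((p / q : ℚ).den : ℤ) ^ 2)
        ≤ 45 * (p ^ 2 + 66 * p * q + 1125 * q ^ 2) := by gcongr
      _ = 90 * p * u ^ 2 := by rw [hN]; ring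
      _ < 180 * u ^ 4 := by nlinarith
      _ ≤ u ^ 8 := by
        have hu4 : 180 ≤ u ^ 4 := by nlinarith
        nlinarith [pow_nonneg (sq_nonneg u) 2]

theorem eq_zero_of_sq_eq_quartic' {u z w : ℤ}
    (h : w ^ 2 = u ^ 4 - 132 * u ^ 2 * z ^ 2 - 144 * z ^ 4) : z = 0 := by
  induction hn : u.natAbs using Nat.strong_induction_on generalizing u z w with
  | _ n ih =>
    by_contra hz
    obtain ⟨x, y, hxy, hx, hxu⟩ := exists_sq_eq_cubic_of_quartic' h hz
    obtain ⟨k, v, w', hkvw, hv, hkx⟩ := exists_quartic'_of_sq_eq_cubic hxy hx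
    have hku : k ^ 2 < u ^ 2 := by
      refine (pow_lt_pow_iff_left₀ (sq_nonneg k) (sq_nonneg u) (by norm_num : 4 ≠ 0)).mp ?_
      rw [← pow_mul, ← pow_mul]
      exact hkx.trans_lt hxu
    exact hv (ih k.natAbs (hn ▸ Int.natAbs_lt_iff_sq_lt.mpr hku) hkvw rfl)

theorem rational_points_rank_zero_curve (X Y : ℚ)
    (h : 1728 * Y ^ 2 = X ^ 3 + 22 * X ^ 2 + 125 * X) :
    X = 0 ∧ Y = 0 := by
  have hE : (216 * Y) ^ 2 = (3 * X) ^ 3 + 66 * (3 * X) ^ 2 + 1125 * (3 * X) := by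
    linear_combination 27 * h
  have hX : X = 0 := by
    by_contra hX
    have hx : 0 < 3 * X := by
      nlinarith [sq_nonneg (3 * X + 33), sq_nonneg (216 * Y), sq_pos_of_ne_zero hX]
    obtain ⟨k, v, w, hkvw, hv, -⟩ := exists_quartic'_of_sq_eq_cubic hE hx
    exact hv (eq_zero_of_sq_eq_quartic' hkvw)
  subst hX
  simpa using h
end

section
/- There are no integers u, v with v(3u² − v²) ≠ 0 such that 1728·(4u² − v²)³ = j · v⁴ · (3u² − v²) with j = −3375, and there are none with j = 16581375. -/
lemma zmod13_a : ∀ a b : ZMod 13,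
    1728 * (4 * a ^ 2 - b ^ 2) ^ 3 = (-3375) * b ^ 4 * (3 * a ^ 2 - b ^ 2) → a = 0 ∧ b = 0 := by
  decide

lemma zmod13_b : ∀ a b : ZMod 13,
    1728 * (4 * a ^ 2 - b ^ 2) ^ 3 = 16581375 * b ^ 4 * (3 * a ^ 2 - b ^ 2) → a = 0 ∧ b = 0 := by
  decide

lemma descend (j : ℤ)
    (hz : ∀ a b : ZMod 13, 1728 * (4 * a ^ 2 - b ^ 2) ^ 3 = (j : ZMod 13) * b ^ 4 * (3 * a ^ 2 - b ^ 2) → a = 0 ∧ b = 0) :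
    ∀ n : ℕ, ∀ u v : ℤ, v.natAbs ≤ n →
      1728 * (4 * u ^ 2 - v ^ 2) ^ 3 = j * v ^ 4 * (3 * u ^ 2 - v ^ 2) → v = 0 := by
  intro n
  induction n with
  | zero => intro u v h _; omega
  | succ n ih =>
      intro u v hle heq
      have hc : ((1728 * (4 * u ^ 2 - v ^ 2) ^ 3 : ℤ) : ZMod 13)
          = ((j * v ^ 4 * (3 * u ^ 2 - v ^ 2) : ℤ) : ZMod 13) := by rw [heq]
      push_cast at hc
      obtain ⟨hu0, hv0⟩ := hz (u : ZMod 13) (v : ZMod 13) hc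
      have hdu : (13 : ℤ) ∣ u := by
        rwa [ZMod.intCast_zmod_eq_zero_iff_dvd] at hu0
      have hdv : (13 : ℤ) ∣ v := by
        rwa [ZMod.intCast_zmod_eq_zero_iff_dvd] at hv0
      obtain ⟨a, rfl⟩ := hdu
      obtain ⟨b, rfl⟩ := hdv
      have key : (13 : ℤ) ^ 6 * (1728 * (4 * a ^ 2 - b ^ 2) ^ 3)
          = 13 ^ 6 * (j * b ^ 4 * (3 * a ^ 2 - b ^ 2)) := by linear_combination heq
      have heq' : 1728 * (4 * a ^ 2 - b ^ 2) ^ 3 = j * b ^ 4 * (3 * a ^ 2 - b ^ 2) :=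
        mul_left_cancel₀ (by norm_num) key
      have hb : b = 0 := by
        apply ih a b _ heq'
        have : (13 * b).natAbs = 13 * b.natAbs := by
          rw [Int.natAbs_mul]; rfl
        omega
      simp [hb]

theorem j_invariant_equations_no_solutions (u v : ℤ) (hv : v * (3 * u ^ 2 - v ^ 2) ≠ 0) :
    1728 * (4 * u ^ 2 - v ^ 2) ^ 3 ≠ (-3375) * v ^ 4 * (3 * u ^ 2 - v ^ 2) ∧
    1728 * (4 * u ^ 2 - v ^ 2) ^ 3 ≠ 16581375 * v ^ 4 * (3 * u ^ 2 - v ^ 2) := by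
  have hvne : v ≠ 0 := fun h => hv (by simp [h])
  constructor
  · intro h
    exact hvne (descend (-3375) (by push_cast; exact zmod13_a) v.natAbs u v le_rfl h)
  · intro h
    exact hvne (descend 16581375 (by push_cast; exact zmod13_b) v.natAbs u v le_rfl h)
end
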